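/- Let n be a natural number, G = (Fin n → ZMod 2), R = AddMonoidAlgebra (ZMod 2) G, and I ⊆ R the augmentation ideal. For every natural number k, the (ZMod 2)-dimension of the quotient module I^k / I^(k+1) equals the binomial coefficient (n choose k). (Here I^0 = R.) -/

import Mathlib

/-! With `xᵢ = [eᵢ] - 1` one has `xᵢ ^ 2 = 0` and `[g] = ∏_{i ∈ supp g} (1 + xᵢ)`, so the
`2 ^ n` square-free monomials `x_S = ∏_{i ∈ S} xᵢ` span the group algebra and hence form a
basis. The augmentation ideal is spanned by the `x_S` with `S ≠ ∅`, and `x_S x_T` is either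
`x_{S ∪ T}` or `0`, so `I ^ k` is spanned by the `x_S` with `k ≤ |S|`. The graded piece
`I ^ k / I ^ (k + 1)` therefore has the `x_S` with `|S| = k` as a basis. -/

open AddMonoidAlgebra

/-- The augmentation homomorphism of the group algebra of `(ZMod 2)^n` over `ZMod 2`:
the algebra homomorphism sending each basis element `[g]` to `1`. -/
noncomputable def aug (n : ℕ) :
    AddMonoidAlgebra (ZMod 2) (Fin n → ZMod 2) →ₐ[ZMod 2] ZMod 2 :=
  AddMonoidAlgebra.lift (ZMod 2) (ZMod 2) (Fin n → ZMod 2) 1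

/-- The augmentation ideal, i.e. the kernel of the augmentation homomorphism. -/
noncomputable def augIdeal (n : ℕ) : Ideal (AddMonoidAlgebra (ZMod 2) (Fin n → ZMod 2)) :=
  RingHom.ker (aug n)

/-- `I ^ k`, viewed as a `ZMod 2`-submodule of the group algebra (`I ^ 0 = R`). -/
noncomputable def IPowSub (n k : ℕ) :
    Submodule (ZMod 2) (AddMonoidAlgebra (ZMod 2) (Fin n → ZMod 2)) :=
  Submodule.restrictScalars (ZMod 2) ((augIdeal n) ^ k)

/-- `I ^ (k+1)`, viewed as a `ZMod 2`-submodule of `I ^ k`. -/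
noncomputable def IPowSuccSub (n k : ℕ) : Submodule (ZMod 2) (IPowSub n k) :=
  Submodule.comap (IPowSub n k).subtype (IPowSub n (k + 1))

open Finset

abbrev GroupAlg (n : ℕ) := AddMonoidAlgebra (ZMod 2) (Fin n → ZMod 2)

instance GroupAlg.instCharP (n : ℕ) : CharP (GroupAlg n) 2 :=
  charP_of_injective_algebraMap' (ZMod 2) 2

/-- `[eᵢ] - 1`, written with `+` since the characteristic is `2`. -/
noncomputable def augGen (n : ℕ) (i : Fin n) : GroupAlg n := single (Pi.single i 1) 1 + 1

noncomputable def augMonomial (n : ℕ) (S : Finset (Fin n)) : GroupAlg n := ∏ i ∈ S, augGen n i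

noncomputable def augFiltration (n k : ℕ) : Submodule (ZMod 2) (GroupAlg n) :=
  Submodule.span (ZMod 2) (augMonomial n '' {S | k ≤ #S})

section
variable {n : ℕ}

theorem augGen_mul_self (i : Fin n) : augGen n i * augGen n i = 0 := by
  rw [augGen, CharTwo.add_mul_self, single_mul_single, ← Pi.single_add, CharTwo.add_self_eq_zero,
    Pi.single_zero, one_mul, mul_one, ← one_def, CharTwo.add_self_eq_zero]

theorem augMonomial_mul_of_disjoint {S T : Finset (Fin n)} (h : Disjoint S T) :
    augMonomial n S * augMonomial n T = augMonomial n (S ∪ T) :=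
  (prod_union h).symm

theorem augMonomial_mul_of_not_disjoint {S T : Finset (Fin n)} (h : ¬Disjoint S T) :
    augMonomial n S * augMonomial n T = 0 := by
  obtain ⟨i, hiS, hiT⟩ := not_disjoint_iff.mp h
  rw [augMonomial, augMonomial, ← mul_prod_erase _ _ hiS, ← mul_prod_erase _ _ hiT,
    mul_mul_mul_comm, augGen_mul_self, zero_mul]

theorem augMonomial_mem_pow (S : Finset (Fin n)) : augMonomial n S ∈ augIdeal n ^ #S := by
  rw [augMonomial, ← prod_const]
  refine Ideal.prod_mem_prod fun i _ => ?_
  simp [augIdeal, augGen, aug, lift_single, CharTwo.add_self_eq_zero]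

theorem single_eq_sum_augMonomial (S : Finset (Fin n)) :
    single (∑ i ∈ S, Pi.single i 1) 1 = ∑ T ∈ S.powerset, augMonomial n T := by
  have single_eq (i : Fin n) : single (Pi.single i 1) 1 = augGen n i + 1 := by
    rw [augGen, add_assoc, CharTwo.add_self_eq_zero, add_zero]
  calc single (∑ i ∈ S, Pi.single i 1) 1
      = ∏ i ∈ S, single (Pi.single i (1 : ZMod 2)) (1 : ZMod 2) := by
        rw [prod_single, prod_const_one]
    _ = ∏ i ∈ S, (augGen n i + 1) := by simp only [single_eq]
    _ = ∑ T ∈ S.powerset, augMonomial n T := by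
        simp only [prod_add, prod_const_one, mul_one]; rfl

theorem eq_sum_pi_single_one (g : Fin n → ZMod 2) :
    g = ∑ i ∈ univ.filter (g · ≠ 0), Pi.single i 1 := by
  funext j
  have zero_or_one : ∀ z : ZMod 2, z = 0 ∨ z = 1 := by decide
  rcases zero_or_one (g j) with h | h <;> simp [Finset.sum_apply, Pi.single_apply, h]

theorem span_augMonomial : Submodule.span (ZMod 2) (Set.range (augMonomial n)) = ⊤ := by
  rw [eq_top_iff, ← (AddMonoidAlgebra.basis (Fin n → ZMod 2) (ZMod 2)).span_eq,
    Submodule.span_le]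
  rintro _ ⟨g, rfl⟩
  rw [AddMonoidAlgebra.basis_apply, eq_sum_pi_single_one g, single_eq_sum_augMonomial]
  exact Submodule.sum_mem _ fun T _ => Submodule.subset_span ⟨T, rfl⟩

noncomputable def augMonomialBasis (n : ℕ) :
    Module.Basis (Finset (Fin n)) (ZMod 2) (GroupAlg n) :=
  basisOfTopLeSpanOfCardEqFinrank (augMonomial n) span_augMonomial.ge <| by
    simp [Module.finrank_eq_card_basis (AddMonoidAlgebra.basis (Fin n → ZMod 2) (ZMod 2))]

theorem coe_augMonomialBasis : ⇑(augMonomialBasis n) = augMonomial n :=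
  coe_basisOfTopLeSpanOfCardEqFinrank _ _ _

theorem linearIndependent_augMonomial : LinearIndependent (ZMod 2) (augMonomial n) :=
  coe_augMonomialBasis (n := n) ▸ (augMonomialBasis n).linearIndependent

theorem augMonomial_mem_augIdeal {S : Finset (Fin n)} (hS : S.Nonempty) :
    augMonomial n S ∈ augIdeal n :=
  Ideal.pow_le_self hS.card_pos.ne' (augMonomial_mem_pow S)

theorem aug_eq_augMonomialBasis_repr_empty (f : GroupAlg n) :
    aug n f = (augMonomialBasis n).repr f ∅ := by
  conv_lhs => rw [← (augMonomialBasis n).sum_repr f]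
  rw [map_sum, Fintype.sum_eq_add_sum_compl ∅, sum_eq_zero fun S hS => ?_, add_zero,
    coe_augMonomialBasis, augMonomial, prod_empty, map_smul, map_one, smul_eq_mul, mul_one]
  have hS : S.Nonempty := nonempty_iff_ne_empty.mpr (by simpa using hS)
  rw [coe_augMonomialBasis, map_smul,
    (augMonomial_mem_augIdeal hS : aug n (augMonomial n S) = 0), smul_zero]

theorem augIdeal_le_augFiltration_one :
    (augIdeal n).restrictScalars (ZMod 2) ≤ augFiltration n 1 := by
  intro f hf
  have hc : (augMonomialBasis n).repr f ∅ = 0 :=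
    (aug_eq_augMonomialBasis_repr_empty f).symm.trans hf
  rw [← (augMonomialBasis n).sum_repr f, Fintype.sum_eq_add_sum_compl ∅, hc, zero_smul, zero_add]
  refine Submodule.sum_mem _ fun S hS => Submodule.smul_mem _ _ <|
    Submodule.subset_span ⟨S, ?_, congrFun coe_augMonomialBasis.symm S⟩
  simpa [Nat.one_le_iff_ne_zero] using hS

theorem augFiltration_le_pow (k : ℕ) :
    augFiltration n k ≤ (augIdeal n ^ k).restrictScalars (ZMod 2) := by
  rw [augFiltration, Submodule.span_le]
  rintro _ ⟨S, hS, rfl⟩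
  exact Ideal.pow_le_pow_right hS (augMonomial_mem_pow S)

theorem augMonomial_mul_mem_augFiltration {k : ℕ} {S T : Finset (Fin n)} (hS : k ≤ #S)
    (hT : T.Nonempty) : augMonomial n S * augMonomial n T ∈ augFiltration n (k + 1) := by
  by_cases hST : Disjoint S T
  · rw [augMonomial_mul_of_disjoint hST]
    refine Submodule.subset_span ⟨S ∪ T, ?_, rfl⟩
    have := hT.card_pos
    simp only [Set.mem_ofPred_eq, card_union_of_disjoint hST]
    omega
  · rw [augMonomial_mul_of_not_disjoint hST]
    exact Submodule.zero_mem _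

theorem augFiltration_mul_le (k : ℕ) :
    augFiltration n k * augFiltration n 1 ≤ augFiltration n (k + 1) := by
  rw [augFiltration, augFiltration, Submodule.span_mul_span, Submodule.span_le]
  rintro _ ⟨_, ⟨S, hS, rfl⟩, _, ⟨T, hT, rfl⟩, rfl⟩
  exact augMonomial_mul_mem_augFiltration hS (card_pos.mp hT)

theorem augFiltration_zero : augFiltration n 0 = ⊤ := by
  simp [augFiltration, span_augMonomial]

theorem IPowSub_eq_augFiltration (k : ℕ) : IPowSub n k = augFiltration n k := by
  refine le_antisymm ?_ (augFiltration_le_pow k)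
  induction k with
  | zero => exact augFiltration_zero ▸ le_top
  | succ k ih =>
    calc IPowSub n (k + 1) = IPowSub n k * (augIdeal n).restrictScalars (ZMod 2) := by
          rw [IPowSub, pow_succ, Ideal.restrictScalars_mul]; rfl
      _ ≤ augFiltration n k * augFiltration n 1 :=
          mul_le_mul' ih augIdeal_le_augFiltration_one
      _ ≤ augFiltration n (k + 1) := augFiltration_mul_le k

theorem finrank_augFiltration (k : ℕ) :
    Module.finrank (ZMod 2) (augFiltration n k)
      = Fintype.card {S : Finset (Fin n) // k ≤ #S} := by
  rw [augFiltration, Set.image_eq_range]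
  exact finrank_span_eq_card (linearIndependent_augMonomial.comp _ Subtype.val_injective)

end

theorem card_finset_le_card_eq_choose_add (α : Type*) [Fintype α] (k : ℕ) :
    Fintype.card {S : Finset α // k ≤ #S}
      = (Fintype.card α).choose k + Fintype.card {S : Finset α // k + 1 ≤ #S} := by
  rw [← Fintype.card_finset_len, ← Fintype.card_subtype_or_disjoint]
  · exact Fintype.card_congr (Equiv.subtypeEquivRight fun S => by omega)
  · simp only [Pi.disjoint_iff, Prop.disjoint_iff]
    omega

/-- The `ZMod 2`-dimension of the graded piece `I ^ k / I ^ (k+1)` is `n choose k`. -/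
theorem finrank_gradedPiece (n k : ℕ) :
    Module.finrank (ZMod 2) (IPowSub n k ⧸ IPowSuccSub n k) = n.choose k := by
  have hdim (j : ℕ) :
      Module.finrank (ZMod 2) (IPowSub n j) = Fintype.card {S : Finset (Fin n) // j ≤ #S} := by
    rw [IPowSub_eq_augFiltration, finrank_augFiltration]
  have hsucc :
      Module.finrank (ZMod 2) (IPowSuccSub n k) = Module.finrank (ZMod 2) (IPowSub n (k + 1)) :=
    (Submodule.comapSubtypeEquivOfLe (p := IPowSub n (k + 1))
      (Ideal.pow_le_pow_right k.le_succ)).finrank_eq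
  have hsum := Submodule.finrank_quotient_add_finrank (IPowSuccSub n k)
  have hcard := card_finset_le_card_eq_choose_add (Fin n) k
  rw [hsucc, hdim, hdim] at hsum
  rw [Fintype.card_fin] at hcard
  omega
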